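/- arXiv:1309.5172 — 3 statements merged into one kernel-verified Lean document; each statement's English description precedes it below -/
import Mathlib

section
/- Let G' be a weighted graph with non-negative edge weights and let C' be a set of vertices of G' such that every two distinct vertices of C' are at distance greater than D in G'. Then for every graph G'' obtained from G' by adding a single new edge (u,v) with non-negative weight, there exists a subset C'' of C' with |C''| = |C'| - 1 such that every two distinct vertices of C'' are at distance greater than D in G''. -/
/-!
Write `d` for the distance in `G'` and `g = wdistToPair G' w u v` for the distance to the new
edge. A walk in `G''` either avoids the new edge or passes through `u` and `v`, so its weight is
at least `min (d x y) (g x + g y)`. Remove from `C'` a point `x₀` minimising `g`. For the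
remaining points `x ≠ y`, let `p, q, r ∈ {u, v}` realise `g x`, `g y`, `g x₀`. Two of them
coincide, and going through the common endpoint bounds one of `d x y`, `d x₀ x`, `d x₀ y` by
`g x + g y`; all three exceed `D`.
-/

open scoped ENNReal

open SimpleGraph

/-- The weight of a walk: the sum of the weights of its (directed) edges. -/
noncomputable def walkWeight {V : Type*} {G : SimpleGraph V} (w : V → V → ℝ≥0∞) {u v : V}
    (p : G.Walk u v) : ℝ≥0∞ :=
  (p.darts.map fun d => w d.toProd.1 d.toProd.2).sum

/-- Weighted shortest-path distance (∞ if there is no connecting walk). -/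
noncomputable def wdist {V : Type*} (G : SimpleGraph V) (w : V → V → ℝ≥0∞) (u v : V) : ℝ≥0∞ :=
  ⨅ p : G.Walk u v, walkWeight w p

section WalkWeight

variable {V : Type*} {G : SimpleGraph V} (w : V → V → ℝ≥0∞)

@[simp] lemma walkWeight_nil {x : V} : walkWeight w (Walk.nil : G.Walk x x) = 0 := by
  simp [walkWeight]

@[simp] lemma walkWeight_cons {x y z : V} (h : G.Adj x y) (p : G.Walk y z) :
    walkWeight w (Walk.cons h p) = w x y + walkWeight w p := by
  simp [walkWeight]

lemma walkWeight_append {x y z : V} (p : G.Walk x y) (q : G.Walk y z) :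
    walkWeight w (p.append q) = walkWeight w p + walkWeight w q := by
  simp [walkWeight]

lemma walkWeight_reverse (hw : ∀ x y, w x y = w y x) {x y : V} (p : G.Walk x y) :
    walkWeight w p.reverse = walkWeight w p := by
  simp [walkWeight, Walk.darts_reverse, List.sum_reverse, Function.comp_def, hw]

end WalkWeight

section Wdist

variable {V : Type*} {G : SimpleGraph V} (w : V → V → ℝ≥0∞)

lemma wdist_le_walkWeight {x y : V} (p : G.Walk x y) : wdist G w x y ≤ walkWeight w p :=
  iInf_le _ p

@[simp] lemma wdist_self (x : V) : wdist G w x x = 0 :=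
  nonpos_iff_eq_zero.1 <| by simpa using wdist_le_walkWeight w (Walk.nil : G.Walk x x)

lemma wdist_le_of_adj {x y : V} (h : G.Adj x y) : wdist G w x y ≤ w x y := by
  simpa using wdist_le_walkWeight w (Walk.cons h Walk.nil)

lemma wdist_triangle (x y z : V) : wdist G w x z ≤ wdist G w x y + wdist G w y z := by
  rw [wdist, wdist, ENNReal.iInf_add]
  refine le_iInf fun p => ?_
  rw [wdist, ENNReal.add_iInf]
  exact le_iInf fun q => (iInf_le _ (p.append q)).trans_eq (walkWeight_append w p q)

lemma wdist_comm (hw : ∀ x y, w x y = w y x) (x y : V) : wdist G w x y = wdist G w y x := by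
  have h : ∀ a b : V, wdist G w a b ≤ wdist G w b a := fun a b =>
    le_iInf fun p => (wdist_le_walkWeight w p.reverse).trans_eq (walkWeight_reverse w hw p)
  exact le_antisymm (h x y) (h y x)

end Wdist

noncomputable def wdistToPair {V : Type*} (G : SimpleGraph V) (w : V → V → ℝ≥0∞)
    (u v x : V) : ℝ≥0∞ :=
  min (wdist G w x u) (wdist G w x v)

section WdistToPair

variable {V : Type*} {G : SimpleGraph V} (w : V → V → ℝ≥0∞) (u v : V)

lemma exists_wdistToPair_eq (x : V) :
    ∃ p, (p = u ∨ p = v) ∧ wdistToPair G w u v x = wdist G w x p := by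
  rcases min_choice (wdist G w x u) (wdist G w x v) with h | h
  exacts [⟨u, .inl rfl, h⟩, ⟨v, .inr rfl, h⟩]

lemma wdistToPair_le_add_of_adj {a b : V} (h : G.Adj a b) :
    wdistToPair G w u v a ≤ w a b + wdistToPair G w u v b := by
  rw [wdistToPair, wdistToPair, ← min_add_add_left]
  exact min_le_min ((wdist_triangle w a b u).trans (by gcongr; exact wdist_le_of_adj w h))
    ((wdist_triangle w a b v).trans (by gcongr; exact wdist_le_of_adj w h))

lemma min_wdist_wdistToPair_add_of_endpoint (hw : ∀ x y, w x y = w y x) {a : V}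
    (ha : a = u ∨ a = v) (c : V) :
    min (wdist G w a c) (wdistToPair G w u v a + wdistToPair G w u v c) =
      wdistToPair G w u v c := by
  rcases ha with rfl | rfl <;> simp [wdistToPair, wdist_comm w hw a c]

lemma min_wdist_wdistToPair_add_le_walkWeight (hw : ∀ x y, w x y = w y x) {x y : V}
    (p : (G ⊔ fromEdgeSet {s(u, v)}).Walk x y) :
    min (wdist G w x y) (wdistToPair G w u v x + wdistToPair G w u v y) ≤ walkWeight w p := by
  induction p with
  | nil => simp [wdistToPair]
  | @cons a b c h q ih =>
    rw [walkWeight_cons]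
    refine le_trans ?_ (add_le_add le_rfl ih)
    rcases (sup_adj _ _ _ _).1 h with hG | hE
    · rw [← min_add_add_left, ← add_assoc]
      exact min_le_min ((wdist_triangle w a b c).trans (by gcongr; exact wdist_le_of_adj w hG))
        (by gcongr; exact wdistToPair_le_add_of_adj w u v hG)
    · obtain ⟨huv, -⟩ := (fromEdgeSet_adj _).1 hE
      have hab : (a = u ∨ a = v) ∧ (b = u ∨ b = v) := by
        rcases Sym2.eq_iff.1 huv with ⟨rfl, rfl⟩ | ⟨rfl, rfl⟩ <;> simp
      rw [min_wdist_wdistToPair_add_of_endpoint w u v hw hab.1,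
        min_wdist_wdistToPair_add_of_endpoint w u v hw hab.2]
      exact le_add_self

lemma min_wdist_le_wdistToPair_add_of_le (hw : ∀ x y, w x y = w y x) {x₀ x y : V}
    (hx : wdistToPair G w u v x₀ ≤ wdistToPair G w u v x)
    (hy : wdistToPair G w u v x₀ ≤ wdistToPair G w u v y) :
    min (wdist G w x y) (min (wdist G w x₀ x) (wdist G w x₀ y)) ≤
      wdistToPair G w u v x + wdistToPair G w u v y := by
  obtain ⟨p, hp, hgx⟩ := exists_wdistToPair_eq w u v x
  obtain ⟨q, hq, hgy⟩ := exists_wdistToPair_eq w u v y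
  obtain ⟨r, hr, hgx₀⟩ := exists_wdistToPair_eq w u v x₀
  have pigeonhole : p = q ∨ r = p ∨ r = q := by grind
  rcases pigeonhole with rfl | rfl | rfl
  · refine (min_le_left _ _).trans ?_
    calc wdist G w x y ≤ wdist G w x p + wdist G w p y := wdist_triangle w x p y
      _ = _ := by rw [wdist_comm w hw p y, ← hgx, ← hgy]
  · refine ((min_le_right _ _).trans (min_le_left _ _)).trans ?_
    calc wdist G w x₀ x ≤ wdist G w x₀ r + wdist G w r x := wdist_triangle w x₀ r x
      _ ≤ _ := by
        rw [wdist_comm w hw r x, ← hgx, ← hgx₀, add_comm]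
        gcongr
  · refine ((min_le_right _ _).trans (min_le_right _ _)).trans ?_
    calc wdist G w x₀ y ≤ wdist G w x₀ r + wdist G w r y := wdist_triangle w x₀ r y
      _ ≤ _ := by
        rw [wdist_comm w hw r y, ← hgy, ← hgx₀]
        gcongr

end WdistToPair

theorem stmt0_general {V : Type*} (G' : SimpleGraph V) (w : V → V → ℝ≥0∞)
    (hw : ∀ x y, w x y = w y x) (D : ℝ≥0∞) (C' : Finset V)
    (hC : ∀ x ∈ C', ∀ y ∈ C', x ≠ y → D < wdist G' w x y)
    (u v : V) :
    ∃ C'' ⊆ C', C''.card = C'.card - 1 ∧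
      ∀ x ∈ C'', ∀ y ∈ C'', x ≠ y →
        D < wdist (G' ⊔ SimpleGraph.fromEdgeSet {s(u, v)}) w x y := by
  classical
  rcases C'.eq_empty_or_nonempty with rfl | hC'
  · exact ⟨∅, by simp⟩
  obtain ⟨x₀, hx₀, hx₀_min⟩ := C'.exists_min_image (wdistToPair G' w u v) hC'
  refine ⟨C'.erase x₀, C'.erase_subset x₀, Finset.card_erase_of_mem hx₀, ?_⟩
  intro x hx y hy hxy
  obtain ⟨hxx₀, hx⟩ := Finset.mem_erase.1 hx
  obtain ⟨hyx₀, hy⟩ := Finset.mem_erase.1 hy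
  have hxy_far := hC x hx y hy hxy
  have htriple_far : D < min (wdist G' w x y) (min (wdist G' w x₀ x) (wdist G' w x₀ y)) :=
    lt_min hxy_far (lt_min (hC x₀ hx₀ x hx hxx₀.symm) (hC x₀ hx₀ y hy hyx₀.symm))
  have hsum := min_wdist_le_wdistToPair_add_of_le w u v hw (hx₀_min x hx) (hx₀_min y hy)
  refine lt_of_lt_of_le ?_ (le_iInf (min_wdist_wdistToPair_add_le_walkWeight w u v hw))
  exact lt_min hxy_far (htriple_far.trans_le hsum)

/-- If all pairwise distances within `C'` exceed `D` in `G'`, then after adding a single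
new edge `{u,v}` there is a subset `C''` of `C'` of size `|C'| - 1` whose pairwise
distances still exceed `D`. -/
theorem stmt0 {V : Type*} (G' : SimpleGraph V) (w : V → V → ℝ≥0∞)
    (hw : ∀ x y, w x y = w y x) (D : ℝ≥0∞) (C' : Finset V)
    (hC : ∀ x ∈ C', ∀ y ∈ C', x ≠ y → D < wdist G' w x y)
    (u v : V) (huv : u ≠ v) (hne : ¬ G'.Adj u v) :
    ∃ C'' ⊆ C', C''.card = C'.card - 1 ∧
      ∀ x ∈ C'', ∀ y ∈ C'', x ≠ y →
        D < wdist (G' ⊔ SimpleGraph.fromEdgeSet {s(u, v)}) w x y :=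
  stmt0_general G' w hw D C' hC u v
end

section
/- Suppose the layered directed graph H (built from G with budget B) contains a directed path of total weight W from vertex (u,i) to vertex (v,j) with j ≥ i. Then the complete graph K on V (with self-loops of weight 0) contains a path from u to v of total weight W that uses non-edges of G of total cost at most j - i. -/
open scoped ENNReal

/-- Adjacency of the layered directed graph `H`: within a level we follow edges of `G`;
a non-edge of `G` (including self-loops) advances the level by its cost. Levels stay `≤ B`. -/
def Hadj {V : Type*} (G : SimpleGraph V) (cst : Sym2 V → ℕ) (B : ℕ) :
    V × ℕ → V × ℕ → Prop := fun p q =>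
  p.2 ≤ B ∧ q.2 ≤ B ∧
    ((G.Adj p.1 q.1 ∧ q.2 = p.2) ∨ (¬ G.Adj p.1 q.1 ∧ q.2 = p.2 + cst s(p.1, q.1)))

/-- Weight of a directed path given as a list of vertices. -/
noncomputable def dlistWeight {α : Type*} (wt : α → α → ℝ≥0∞) (l : List α) : ℝ≥0∞ :=
  ((l.zip l.tail).map fun p => wt p.1 p.2).sum

/-- Total cost of the non-edges of `G` used by a path in the complete graph `K`,
given as a list of vertices. -/
def listCost {V : Type*} (G : SimpleGraph V) [DecidableRel G.Adj] (cst : Sym2 V → ℕ)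
    (l : List V) : ℕ :=
  ((l.zip l.tail).map fun p => if G.Adj p.1 p.2 then 0 else cst s(p.1, p.2)).sum

/-! Projecting a path of `H` to `V` keeps its weight, and each step raises the level by exactly
the cost it pays in `K`, so the levels telescope: the projected path costs exactly `j - i`. -/

section

variable {V : Type*} (G : SimpleGraph V) [DecidableRel G.Adj] (cst : Sym2 V → ℕ)

lemma dlistWeight_map {α β : Type*} (wt : β → β → ℝ≥0∞) (f : α → β) (l : List α) :
    dlistWeight wt (l.map f) = dlistWeight (fun p q => wt (f p) (f q)) l := by
  unfold dlistWeight
  rw [← List.map_tail, List.zip_map]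
  simp [Function.comp_def]

lemma listCost_cons_cons (a b : V) (l : List V) :
    listCost G cst (a :: b :: l) =
      (if G.Adj a b then 0 else cst s(a, b)) + listCost G cst (b :: l) := by
  simp [listCost]

lemma Hadj.snd_eq {B : ℕ} {p q : V × ℕ} (h : Hadj G cst B p q) :
    q.2 = p.2 + if G.Adj p.1 q.1 then 0 else cst s(p.1, q.1) := by
  obtain ⟨-, -, ⟨hadj, hq⟩ | ⟨hadj, hq⟩⟩ := h <;> simp [hadj, hq]

lemma listCost_map_fst_add_of_chain {B : ℕ} {a : V × ℕ} {l : List (V × ℕ)}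
    (h : (a :: l).IsChain (Hadj G cst B)) :
    listCost G cst ((a :: l).map Prod.fst) + a.2 = ((a :: l).getLast (List.cons_ne_nil a l)).2 := by
  induction l generalizing a with
  | nil => simp [listCost]
  | cons b l ih =>
    rw [List.isChain_cons_cons] at h
    rw [List.getLast_cons_cons, ← ih h.2, List.map_cons, List.map_cons, listCost_cons_cons,
      Hadj.snd_eq G cst h.1]
    ring

end

theorem stmt5_general {V : Type*} (G : SimpleGraph V) [DecidableRel G.Adj]
    (w : V → V → ℝ≥0∞) (cst : Sym2 V → ℕ) (B : ℕ)
    (u v : V) (i j : ℕ) (W : ℝ≥0∞)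
    (l : List (V × ℕ)) (hhead : l.head? = some (u, i)) (hlast : l.getLast? = some (v, j))
    (hchain : l.Chain' (Hadj G cst B))
    (hW : dlistWeight (fun p q => w p.1 q.1) l = W) :
    ∃ l' : List V, l'.head? = some u ∧ l'.getLast? = some v ∧
      dlistWeight w l' = W ∧ listCost G cst l' ≤ j - i := by
  obtain ⟨t, rfl⟩ : ∃ t, l = (u, i) :: t := List.head?_eq_some_iff.mp hhead
  have hcost := listCost_map_fst_add_of_chain G cst hchain
  rw [List.getLast?_eq_some_getLast (List.cons_ne_nil _ _), Option.some.injEq] at hlast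
  refine ⟨((u, i) :: t).map Prod.fst, rfl, ?_, by rw [dlistWeight_map, hW], ?_⟩
  · rw [List.getLast?_map, List.getLast?_eq_some_getLast (List.cons_ne_nil _ _), hlast]
    rfl
  · rw [hlast] at hcost
    omega

/-- A directed path in `H` of weight `W` from `(u,i)` to `(v,j)` projects to a path in the
complete graph `K` of the same weight using non-edges of total cost at most `j - i`. -/
theorem stmt5 {V : Type*} (G : SimpleGraph V) [DecidableRel G.Adj]
    (w : V → V → ℝ≥0∞) (cst : Sym2 V → ℕ) (B : ℕ)
    (u v : V) (i j : ℕ) (hij : i ≤ j) (W : ℝ≥0∞)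
    (l : List (V × ℕ)) (hhead : l.head? = some (u, i)) (hlast : l.getLast? = some (v, j))
    (hchain : l.Chain' (Hadj G cst B))
    (hW : dlistWeight (fun p q => w p.1 q.1) l = W) :
    ∃ l' : List V, l'.head? = some u ∧ l'.getLast? = some v ∧
      dlistWeight w l' = W ∧ listCost G cst l' ≤ j - i :=
  stmt5_general G w cst B u v i j W l hhead hlast hchain hW
end

section
/- In the Set Cover reduction graph G constructed from an instance (X,S,k) of Set Cover: every two vertices v, v' in V ∖ {a} satisfy dist_G(v,v') ≤ 2; moreover dist_G(a,v) ≤ 3 for all v, with dist_G(a,v) = 3 if and only if v ∈ T. -/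
/-- Vertices of the reduction graph built from a Set Cover instance `(X, k)` over element
type `α`, with `m` copies of the element set: `a`, `b`, one vertex `y x` per set `x ∈ X`,
vertices `t i s` (copy `i` of element `s`), and one vertex `u p` per pair of distinct
copy indices. -/
inductive RV (α : Type) (X : Finset (Finset α)) (m : ℕ) : Type where
  | a : RV α X m
  | b : RV α X m
  | y : {x : Finset α // x ∈ X} → RV α X m
  | t : Fin m → α → RV α X m
  | u : {p : Fin m × Fin m // p.1 < p.2} → RV α X m

/-- Base (one-sided) adjacency relation of the reduction graph. -/
def baseRel {α : Type} {X : Finset (Finset α)} {m : ℕ} : RV α X m → RV α X m → Prop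
  | RV.a, RV.b => True
  | RV.b, RV.y _ => True
  | RV.b, RV.u _ => True
  | RV.y _, RV.y _ => True
  | RV.y x, RV.t _ s => s ∈ x.1
  | RV.t i _, RV.u p => i = p.1.1 ∨ i = p.1.2
  | RV.u _, RV.u _ => True
  | _, _ => False

/-- The reduction graph: the symmetrization of `baseRel`. -/
def RG (α : Type) (X : Finset (Finset α)) (m : ℕ) : SimpleGraph (RV α X m) :=
  SimpleGraph.fromRel baseRel

section Aux

variable {α : Type} {X : Finset (Finset α)} {m : ℕ}

lemma rg_adj (v w : RV α X m) :
    (RG α X m).Adj v w ↔ v ≠ w ∧ (baseRel v w ∨ baseRel w v) :=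
  SimpleGraph.fromRel_adj _ _ _

lemma rg_dist_le_one {v w : RV α X m} (h : (RG α X m).Adj v w) :
    (RG α X m).dist v w ≤ 1 := by
  simpa using SimpleGraph.dist_le (SimpleGraph.Walk.cons h SimpleGraph.Walk.nil)

lemma rg_dist_le_two {v w x : RV α X m} (h1 : (RG α X m).Adj v w)
    (h2 : (RG α X m).Adj w x) : (RG α X m).dist v x ≤ 2 := by
  simpa using SimpleGraph.dist_le
    (SimpleGraph.Walk.cons h1 (SimpleGraph.Walk.cons h2 SimpleGraph.Walk.nil))

lemma rg_dist_le_three {v w x z : RV α X m} (h1 : (RG α X m).Adj v w)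
    (h2 : (RG α X m).Adj w x) (h3 : (RG α X m).Adj x z) :
    (RG α X m).dist v z ≤ 3 := by
  simpa using SimpleGraph.dist_le
    (SimpleGraph.Walk.cons h1 (SimpleGraph.Walk.cons h2
      (SimpleGraph.Walk.cons h3 SimpleGraph.Walk.nil)))

lemma exists_pair (h2 : 2 ≤ m) (i j : Fin m) :
    ∃ q : {p : Fin m × Fin m // p.1 < p.2},
      (i = q.1.1 ∨ i = q.1.2) ∧ (j = q.1.1 ∨ j = q.1.2) := by
  rcases lt_trichotomy i j with h | h | h
  · exact ⟨⟨(i, j), h⟩, Or.inl rfl, Or.inr rfl⟩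
  · subst h
    have : Nontrivial (Fin m) := Fin.nontrivial_iff_two_le.mpr h2
    obtain ⟨k, hk⟩ := exists_ne i
    rcases lt_or_gt_of_ne hk with h | h
    · exact ⟨⟨(k, i), h⟩, Or.inr rfl, Or.inr rfl⟩
    · exact ⟨⟨(i, k), h⟩, Or.inl rfl, Or.inl rfl⟩
  · exact ⟨⟨(j, i), h⟩, Or.inr rfl, Or.inl rfl⟩

lemma neighbor_of_a {v : RV α X m} (h : (RG α X m).Adj RV.a v) : v = RV.b := by
  cases v <;> simp [rg_adj, baseRel] at h <;> rfl

lemma not_adj_b_t (i : Fin m) (s : α) : ¬ (RG α X m).Adj RV.b (RV.t i s) := by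
  simp [rg_adj, baseRel]

lemma walk_a_t_length (i : Fin m) (s : α)
    (p : (RG α X m).Walk RV.a (RV.t i s)) : 3 ≤ p.length := by
  cases p with
  | cons h q =>
    have hb := neighbor_of_a h
    subst hb
    cases q with
    | cons h' q' =>
      cases q' with
      | nil => exact absurd h' (not_adj_b_t i s)
      | cons h'' q'' => simp [SimpleGraph.Walk.length_cons]

end Aux

/-- In the reduction graph: all pairs of vertices other than `a` are at distance at most 2;
`a` is within distance 3 of everything, with distance exactly 3 precisely for the vertices
of `T`. -/
theorem stmt17 {α : Type} (X : Finset (Finset α)) (k m : ℕ)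
    (hm : m = X.card * k) (h2 : 2 ≤ m)
    (hcov : ∀ s : α, ∃ x ∈ X, s ∈ x) :
    (∀ v v' : RV α X m, v ≠ RV.a → v' ≠ RV.a → (RG α X m).dist v v' ≤ 2) ∧
    (∀ v : RV α X m, (RG α X m).dist RV.a v ≤ 3) ∧
    (∀ v : RV α X m, (RG α X m).dist RV.a v = 3 ↔ ∃ i s, v = RV.t i s) := by
  have hab : (RG α X m).Adj RV.a RV.b := by simp [rg_adj, baseRel]
  have hby : ∀ x, (RG α X m).Adj RV.b (RV.y x) := by intro x; simp [rg_adj, baseRel]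
  have hbu : ∀ p, (RG α X m).Adj RV.b (RV.u p) := by intro p; simp [rg_adj, baseRel]
  have hyy : ∀ x x', x ≠ x' → (RG α X m).Adj (RV.y x) (RV.y x') := by
    intro x x' hne
    simp [rg_adj, baseRel, hne]
  have hyt : ∀ x i s, s ∈ x.1 → (RG α X m).Adj (RV.y x) (RV.t i s) := by
    intro x i s hs; simp [rg_adj, baseRel, hs]
  have htu : ∀ i s q, (i = q.1.1 ∨ i = q.1.2) → (RG α X m).Adj (RV.t i s) (RV.u q) := by
    intro i s q hq; simp [rg_adj, baseRel, hq]
  have huu : ∀ p q, p ≠ q → (RG α X m).Adj (RV.u p) (RV.u q) := by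
    intro p q hne; simp [rg_adj, baseRel, hne]
  -- distance from b to any t is ≤ 2 via a covering set vertex
  have hbt : ∀ i s, (RG α X m).dist RV.b (RV.t i s) ≤ 2 := by
    intro i s
    obtain ⟨x, hx, hs⟩ := hcov s
    exact rg_dist_le_two (hby ⟨x, hx⟩) (hyt ⟨x, hx⟩ i s hs)
  -- Part 1
  have part1 : ∀ v v' : RV α X m, v ≠ RV.a → v' ≠ RV.a → (RG α X m).dist v v' ≤ 2 := by
    intro v v' hv hv'
    by_cases hvv : v = v'
    · subst hvv; simp [SimpleGraph.dist_self]
    cases v with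
    | a => exact absurd rfl hv
    | b =>
      cases v' with
      | a => exact absurd rfl hv'
      | b => exact absurd rfl hvv
      | y x => exact le_trans (rg_dist_le_one (hby x)) (by norm_num)
      | t i s => exact hbt i s
      | u p => exact le_trans (rg_dist_le_one (hbu p)) (by norm_num)
    | y x =>
      cases v' with
      | a => exact absurd rfl hv'
      | b => exact le_trans (rg_dist_le_one ((hby x).symm)) (by norm_num)
      | y x' =>
        have hne : x ≠ x' := fun h => hvv (by rw [h])
        exact le_trans (rg_dist_le_one (hyy x x' hne)) (by norm_num)
      | t i s =>
        by_cases hs : s ∈ x.1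
        · exact le_trans (rg_dist_le_one (hyt x i s hs)) (by norm_num)
        · obtain ⟨x', hx', hs'⟩ := hcov s
          have hne : x ≠ ⟨x', hx'⟩ := by
            intro h
            exact hs (by rw [h]; exact hs')
          exact rg_dist_le_two (hyy x ⟨x', hx'⟩ hne) (hyt ⟨x', hx'⟩ i s hs')
      | u p => exact rg_dist_le_two ((hby x).symm) (hbu p)
    | t i s =>
      cases v' with
      | a => exact absurd rfl hv'
      | b => rw [SimpleGraph.dist_comm]; exact hbt i s
      | y x' =>
        by_cases hs : s ∈ x'.1
        · exact le_trans (rg_dist_le_one ((hyt x' i s hs).symm)) (by norm_num)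
        · obtain ⟨x'', hx'', hs'⟩ := hcov s
          have hne : (⟨x'', hx''⟩ : {x : Finset α // x ∈ X}) ≠ x' := by
            intro h
            exact hs (by rw [← h]; exact hs')
          exact rg_dist_le_two ((hyt ⟨x'', hx''⟩ i s hs').symm) (hyy ⟨x'', hx''⟩ x' hne)
      | t j s' =>
        obtain ⟨q, hq1, hq2⟩ := exists_pair h2 i j
        exact rg_dist_le_two (htu i s q hq1) ((htu j s' q hq2).symm)
      | u p =>
        by_cases hp : i = p.1.1 ∨ i = p.1.2
        · exact le_trans (rg_dist_le_one (htu i s p hp)) (by norm_num)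
        · obtain ⟨q, hq1, _⟩ := exists_pair h2 i i
          have hne : q ≠ p := by
            intro h
            exact hp (h ▸ hq1)
          exact rg_dist_le_two (htu i s q hq1) (huu q p hne)
    | u p =>
      cases v' with
      | a => exact absurd rfl hv'
      | b => exact le_trans (rg_dist_le_one ((hbu p).symm)) (by norm_num)
      | y x' => exact rg_dist_le_two ((hbu p).symm) (hby x')
      | t j s' =>
        by_cases hp : j = p.1.1 ∨ j = p.1.2
        · exact le_trans (rg_dist_le_one ((htu j s' p hp).symm)) (by norm_num)
        · obtain ⟨q, hq1, _⟩ := exists_pair h2 j j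
          have hne : p ≠ q := by
            intro h
            exact hp (h ▸ hq1)
          exact rg_dist_le_two (huu p q hne) ((htu j s' q hq1).symm)
      | u q =>
        have hne : p ≠ q := fun h => hvv (by rw [h])
        exact le_trans (rg_dist_le_one (huu p q hne)) (by norm_num)
  -- distances from a
  have hay : ∀ x, (RG α X m).dist RV.a (RV.y x) ≤ 2 := fun x =>
    rg_dist_le_two hab (hby x)
  have hau : ∀ p, (RG α X m).dist RV.a (RV.u p) ≤ 2 := fun p =>
    rg_dist_le_two hab (hbu p)
  have hat : ∀ i s, (RG α X m).dist RV.a (RV.t i s) = 3 := by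
    intro i s
    obtain ⟨x, hx, hs⟩ := hcov s
    have hle : (RG α X m).dist RV.a (RV.t i s) ≤ 3 :=
      rg_dist_le_three hab (hby ⟨x, hx⟩) (hyt ⟨x, hx⟩ i s hs)
    have hreach : (RG α X m).Reachable RV.a (RV.t i s) :=
      ⟨SimpleGraph.Walk.cons hab (SimpleGraph.Walk.cons (hby ⟨x, hx⟩)
        (SimpleGraph.Walk.cons (hyt ⟨x, hx⟩ i s hs) SimpleGraph.Walk.nil))⟩
    obtain ⟨p, hp⟩ := hreach.exists_walk_length_eq_dist
    have := walk_a_t_length i s p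
    omega
  refine ⟨part1, ?_, ?_⟩
  · intro v
    cases v with
    | a => simp [SimpleGraph.dist_self]
    | b => exact le_trans (rg_dist_le_one hab) (by norm_num)
    | y x => exact le_trans (hay x) (by norm_num)
    | t i s => exact le_of_eq (hat i s)
    | u p => exact le_trans (hau p) (by norm_num)
  · intro v
    constructor
    · intro hd
      cases v with
      | a => simp [SimpleGraph.dist_self] at hd
      | b =>
        have := rg_dist_le_one hab
        omega
      | y x =>
        have := hay x
        omega
      | t i s => exact ⟨i, s, rfl⟩
      | u p =>
        have := hau p
        omega
    · rintro ⟨i, s, rfl⟩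
      exact hat i s
end
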